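/- There exists a sequence of Dirichlet eigenfunctions on the right isosceles triangle (namely u_{k,k+1}, k = 1, 2, 3, …, with semiclassical parameters h_{k,k+1} → 0) whose Neumann data on the bottom side satisfies liminf_{k→∞} ∫₀^{1/2} |h_{k,k+1} ∂_ν u_{k,k+1}(x,0)|² dx > limsup_{k→∞} ∫_{1/2}^{1} |h_{k,k+1} ∂_ν u_{k,k+1}(x,0)|² dx, so equidistribution of Neumann data on half-sides fails for this subsequence. -/

import Mathlib

open Real MeasureTheory Filter

/-- The sign `ε(m,n)`: `1` if `m+n` is odd, `-1` if `m+n` is even. -/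
noncomputable def eps (m n : ℕ) : ℝ := if Odd (m + n) then 1 else -1

/-- The eigenfunctions `u_{mn}` on the right isosceles triangle. -/
noncomputable def u (m n : ℕ) (x y : ℝ) : ℝ :=
  2 * (Real.sin (n * Real.pi * x) * Real.sin (m * Real.pi * y)
      + eps m n * Real.sin (m * Real.pi * x) * Real.sin (n * Real.pi * y))

/-- The semiclassical parameter `h_{mn} = (π²(m²+n²))^{-1/2}`. -/
noncomputable def hmn (m n : ℕ) : ℝ :=
  1 / Real.sqrt (Real.pi ^ 2 * ((m : ℝ) ^ 2 + (n : ℝ) ^ 2))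

/-- The right isosceles triangle `T` with vertices `(0,0)`, `(1,0)`, `(0,1)`. -/
def T : Set (ℝ × ℝ) := {p | 0 ≤ p.1 ∧ 0 ≤ p.2 ∧ p.1 + p.2 ≤ 1}

noncomputable def Fa (p q a b x : ℝ) : ℝ :=
  (p^2+q^2)/2*x - p^2/(4*a)*Real.sin (2*a*x) - q^2/(4*b)*Real.sin (2*b*x)
    + p*q*((a-b)⁻¹*Real.sin ((a-b)*x) - (a+b)⁻¹*Real.sin ((a+b)*x))

lemma hasDerivAt_sin_mul (c x : ℝ) : HasDerivAt (fun t => Real.sin (c*t)) (c * Real.cos (c*x)) x := by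
  have := (Real.hasDerivAt_sin (c*x)).comp x ((hasDerivAt_id x).const_mul c)
  simpa [mul_comm, Function.comp_def] using this

lemma hasDerivAt_cos_mul (c x : ℝ) : HasDerivAt (fun t => Real.cos (c*t)) (-(c * Real.sin (c*x))) x := by
  have := (Real.hasDerivAt_cos (c*x)).comp x ((hasDerivAt_id x).const_mul c)
  simpa [mul_comm, Function.comp_def] using this

lemma hasDerivAt_Fa (p q a b : ℝ) (ha : a ≠ 0) (hb : b ≠ 0) (hab : a - b ≠ 0)
    (hab' : a + b ≠ 0) (x : ℝ) :
    HasDerivAt (fun x => Fa p q a b x) ((p*Real.sin (a*x) + q*Real.sin (b*x))^2) x := by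
  have h1 : HasDerivAt (fun x : ℝ => (p^2+q^2)/2*x) ((p^2+q^2)/2) x := by
    simpa using (hasDerivAt_id x).const_mul ((p^2+q^2)/2)
  have h2 := (hasDerivAt_sin_mul (2*a) x).const_mul (p^2/(4*a))
  have h3 := (hasDerivAt_sin_mul (2*b) x).const_mul (q^2/(4*b))
  have h4 := ((hasDerivAt_sin_mul (a-b) x).const_mul (a-b)⁻¹).sub
    ((hasDerivAt_sin_mul (a+b) x).const_mul (a+b)⁻¹)
  have H := ((h1.sub h2).sub h3).add (h4.const_mul (p*q))
  refine H.congr_deriv ?_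
  have e1 : Real.cos (2*a*x) = 1 - 2*Real.sin (a*x)^2 := by
    rw [show 2*a*x = 2*(a*x) by ring, Real.cos_two_mul']
    have := Real.sin_sq_add_cos_sq (a*x); linarith
  have e2 : Real.cos (2*b*x) = 1 - 2*Real.sin (b*x)^2 := by
    rw [show 2*b*x = 2*(b*x) by ring, Real.cos_two_mul']
    have := Real.sin_sq_add_cos_sq (b*x); linarith
  rw [show (a-b)*x = a*x - b*x by ring, show (a+b)*x = a*x + b*x by ring,
    e1, e2, Real.cos_sub, Real.cos_add]
  field_simp
  ring

lemma integral_two_sin (p q a b : ℝ) (ha : a ≠ 0) (hb : b ≠ 0) (hab : a - b ≠ 0)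
    (hab' : a + b ≠ 0) (s t : ℝ) :
    ∫ x in s..t, (p*Real.sin (a*x) + q*Real.sin (b*x))^2
      = Fa p q a b t - Fa p q a b s := by
  refine intervalIntegral.integral_eq_sub_of_hasDerivAt
    (fun x _ => hasDerivAt_Fa p q a b ha hb hab hab' x) ?_
  exact (Continuous.intervalIntegrable (by continuity) s t)

lemma sin_odd_half (j : ℕ) : Real.sin ((2*(j:ℝ)+1)*π/2) = (-1)^j := by
  induction j with
  | zero => norm_num
  | succ j ih =>
    have : (2*((j:ℝ)+1)+1)*π/2 = (2*(j:ℝ)+1)*π/2 + π := by ring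
    push_cast
    rw [this, Real.sin_add_pi]
    push_cast at ih
    rw [ih]; ring



lemma u_simp (k : ℕ) (x y : ℝ) : u (k+1) (k+2) x y
    = 2*(Real.sin (((k:ℝ)+2)*π*x)*Real.sin (((k:ℝ)+1)*π*y)
       + Real.sin (((k:ℝ)+1)*π*x)*Real.sin (((k:ℝ)+2)*π*y)) := by
  have h : Odd (k+1 + (k+2)) := ⟨k+1, by ring⟩
  simp only [u, eps, if_pos h]; push_cast; ring_nf
lemma hmn_sq (k : ℕ) : (hmn (k+1) (k+2))^2 = 1/(π^2*(((k:ℝ)+1)^2+((k:ℝ)+2)^2)) := by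
  rw [hmn, div_pow, one_pow, Real.sq_sqrt (by positivity)]
  push_cast; ring_nf

lemma hmn_pos (k : ℕ) : 0 < hmn (k+1) (k+2) := by
  rw [hmn]
  have : (0:ℝ) < ((k+1:ℕ) : ℝ)^2 + ((k+2:ℕ):ℝ)^2 := by positivity
  positivity

lemma sin_val (j : ℕ) (c : ℝ) (hc : c = (j:ℝ) * π) : Real.sin c = 0 := by
  rw [hc]; exact Real.sin_nat_mul_pi j

-- derivative of u in y at 0
lemma deriv_u_y0 (k : ℕ) (x : ℝ) :
    deriv (fun y => u (k+1) (k+2) x y) 0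
      = 2*(Real.sin (((k:ℝ)+2)*π*x)*(((k:ℝ)+1)*π) + Real.sin (((k:ℝ)+1)*π*x)*(((k:ℝ)+2)*π)) := by
  have H : HasDerivAt (fun y => u (k+1) (k+2) x y)
      (2*(Real.sin (((k:ℝ)+2)*π*x)*((((k:ℝ)+1)*π) * Real.cos (((k:ℝ)+1)*π*0))
        + Real.sin (((k:ℝ)+1)*π*x)*((((k:ℝ)+2)*π) * Real.cos (((k:ℝ)+2)*π*0)))) 0 := by
    have e : (fun y => u (k+1) (k+2) x y)
        = fun y => 2*(Real.sin (((k:ℝ)+2)*π*x)*Real.sin (((k:ℝ)+1)*π*y)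
          + Real.sin (((k:ℝ)+1)*π*x)*Real.sin (((k:ℝ)+2)*π*y)) := funext (u_simp k x)
    rw [e]
    exact (((hasDerivAt_sin_mul (((k:ℝ)+1)*π) 0).const_mul (Real.sin (((k:ℝ)+2)*π*x))).add
      ((hasDerivAt_sin_mul (((k:ℝ)+2)*π) 0).const_mul (Real.sin (((k:ℝ)+1)*π*x)))).const_mul 2
  rw [H.deriv]; simp

lemma neumann_integral (k : ℕ) (s t : ℝ) :
    ∫ x in s..t, (hmn (k+1) (k+2))^2 * (deriv (fun y => u (k+1) (k+2) x y) 0)^2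
      = (hmn (k+1) (k+2))^2 *
        (Fa (2*(((k:ℝ)+1)*π)) (2*(((k:ℝ)+2)*π)) (((k:ℝ)+2)*π) (((k:ℝ)+1)*π) t
         - Fa (2*(((k:ℝ)+1)*π)) (2*(((k:ℝ)+2)*π)) (((k:ℝ)+2)*π) (((k:ℝ)+1)*π) s) := by
  have hπ := Real.pi_pos
  have e : (fun x => (hmn (k+1) (k+2))^2 * (deriv (fun y => u (k+1) (k+2) x y) 0)^2)
      = fun x => (hmn (k+1) (k+2))^2 *
        ((2*(((k:ℝ)+1)*π))*Real.sin ((((k:ℝ)+2)*π)*x)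
          + (2*(((k:ℝ)+2)*π))*Real.sin ((((k:ℝ)+1)*π)*x))^2 := by
    funext x; rw [deriv_u_y0]; ring
  rw [e, intervalIntegral.integral_const_mul, integral_two_sin]
  · positivity
  · positivity
  · intro hc; rw [show ((k:ℝ)+2)*π - ((k:ℝ)+1)*π = π by ring] at hc; exact Real.pi_ne_zero hc
  · positivity

-- value of the halved antiderivative
lemma Fa_eval (k : ℕ) :
    Fa (2*(((k:ℝ)+1)*π)) (2*(((k:ℝ)+2)*π)) (((k:ℝ)+2)*π) (((k:ℝ)+1)*π) (1/2)
      = ((2*(((k:ℝ)+1)*π))^2+(2*(((k:ℝ)+2)*π))^2)/4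
        + (2*(((k:ℝ)+1)*π))*(2*(((k:ℝ)+2)*π))*(π⁻¹ - ((2*(k:ℝ)+3)*π)⁻¹*(-1)^(k+1)) ∧
    Fa (2*(((k:ℝ)+1)*π)) (2*(((k:ℝ)+2)*π)) (((k:ℝ)+2)*π) (((k:ℝ)+1)*π) 0 = 0 ∧
    Fa (2*(((k:ℝ)+1)*π)) (2*(((k:ℝ)+2)*π)) (((k:ℝ)+2)*π) (((k:ℝ)+1)*π) 1
      = ((2*(((k:ℝ)+1)*π))^2+(2*(((k:ℝ)+2)*π))^2)/2 := by
  have hπ := Real.pi_ne_zero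
  have e1 : Real.sin (2*(((k:ℝ)+2)*π)*(1/2)) = 0 := sin_val (k+2) _ (by push_cast; ring)
  have e2 : Real.sin (2*(((k:ℝ)+1)*π)*(1/2)) = 0 := sin_val (k+1) _ (by push_cast; ring)
  have e3 : Real.sin ((((k:ℝ)+2)*π - ((k:ℝ)+1)*π)*(1/2)) = 1 := by
    rw [show (((k:ℝ)+2)*π - ((k:ℝ)+1)*π)*(1/2) = π/2 by ring]; exact Real.sin_pi_div_two
  have e4 : Real.sin ((((k:ℝ)+2)*π + ((k:ℝ)+1)*π)*(1/2)) = (-1:ℝ)^(k+1) := by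
    have h := sin_odd_half (k+1); push_cast at h ⊢
    rw [show (((k:ℝ)+2)*π + ((k:ℝ)+1)*π)*(1/2) = (2*((k:ℝ)+1)+1)*π/2 by ring]; exact h
  have f1 : Real.sin (2*(((k:ℝ)+2)*π)*1) = 0 := sin_val (2*k+4) _ (by push_cast; ring)
  have f2 : Real.sin (2*(((k:ℝ)+1)*π)*1) = 0 := sin_val (2*k+2) _ (by push_cast; ring)
  have f3 : Real.sin ((((k:ℝ)+2)*π - ((k:ℝ)+1)*π)*1) = 0 := sin_val 1 _ (by push_cast; ring)
  have f4 : Real.sin ((((k:ℝ)+2)*π + ((k:ℝ)+1)*π)*1) = 0 := sin_val (2*k+3) _ (by push_cast; ring)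
  refine ⟨?_, ?_, ?_⟩
  · simp only [Fa, e1, e2, e3, e4]
    rw [show (((k:ℝ)+2)*π - ((k:ℝ)+1)*π) = π by ring,
      show (((k:ℝ)+2)*π + ((k:ℝ)+1)*π) = (2*(k:ℝ)+3)*π by ring]
    ring
  · simp [Fa]
  · simp only [Fa, f1, f2, f3, f4]; ring

lemma pde (k : ℕ) (x y : ℝ) :
    -(hmn (k+1) (k+2))^2 *
      (deriv (fun x' => deriv (fun x'' => u (k+1) (k+2) x'' y) x') x
        + deriv (fun y' => deriv (fun y'' => u (k+1) (k+2) x y'') y') y)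
    = u (k+1) (k+2) x y := by
  have hπ := Real.pi_ne_zero
  have dx : ∀ x', deriv (fun x'' => u (k+1) (k+2) x'' y) x'
      = 2*((((k:ℝ)+2)*π*Real.cos (((k:ℝ)+2)*π*x'))*Real.sin (((k:ℝ)+1)*π*y)
          + (((k:ℝ)+1)*π*Real.cos (((k:ℝ)+1)*π*x'))*Real.sin (((k:ℝ)+2)*π*y)) := by
    intro x'
    have e : (fun x'' => u (k+1) (k+2) x'' y)
        = fun x'' => 2*(Real.sin (((k:ℝ)+2)*π*x'')*Real.sin (((k:ℝ)+1)*π*y)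
            + Real.sin (((k:ℝ)+1)*π*x'')*Real.sin (((k:ℝ)+2)*π*y)) := funext fun t => u_simp k t y
    rw [e]
    exact ((((hasDerivAt_sin_mul (((k:ℝ)+2)*π) x').mul_const _).add
      ((hasDerivAt_sin_mul (((k:ℝ)+1)*π) x').mul_const _)).const_mul 2).deriv
  have d2x : deriv (fun x' => deriv (fun x'' => u (k+1) (k+2) x'' y) x') x
      = 2*(((((k:ℝ)+2)*π)*(-(((k:ℝ)+2)*π*Real.sin (((k:ℝ)+2)*π*x))))*Real.sin (((k:ℝ)+1)*π*y)
          + ((((k:ℝ)+1)*π)*(-(((k:ℝ)+1)*π*Real.sin (((k:ℝ)+1)*π*x))))*Real.sin (((k:ℝ)+2)*π*y)) := by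
    rw [funext dx]
    exact (((((hasDerivAt_cos_mul (((k:ℝ)+2)*π) x).const_mul (((k:ℝ)+2)*π)).mul_const _).add
      ((((hasDerivAt_cos_mul (((k:ℝ)+1)*π) x).const_mul (((k:ℝ)+1)*π)).mul_const _))).const_mul 2).deriv
  have dy : ∀ y', deriv (fun y'' => u (k+1) (k+2) x y'') y'
      = 2*(Real.sin (((k:ℝ)+2)*π*x)*((((k:ℝ)+1)*π)*Real.cos (((k:ℝ)+1)*π*y'))
          + Real.sin (((k:ℝ)+1)*π*x)*((((k:ℝ)+2)*π)*Real.cos (((k:ℝ)+2)*π*y'))) := by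
    intro y'
    have e : (fun y'' => u (k+1) (k+2) x y'')
        = fun y'' => 2*(Real.sin (((k:ℝ)+2)*π*x)*Real.sin (((k:ℝ)+1)*π*y'')
            + Real.sin (((k:ℝ)+1)*π*x)*Real.sin (((k:ℝ)+2)*π*y'')) := funext fun t => u_simp k x t
    rw [e]
    exact ((((hasDerivAt_sin_mul (((k:ℝ)+1)*π) y').const_mul _).add
      ((hasDerivAt_sin_mul (((k:ℝ)+2)*π) y').const_mul _)).const_mul 2).deriv
  have d2y : deriv (fun y' => deriv (fun y'' => u (k+1) (k+2) x y'') y') y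
      = 2*(Real.sin (((k:ℝ)+2)*π*x)*((((k:ℝ)+1)*π)*(-(((k:ℝ)+1)*π*Real.sin (((k:ℝ)+1)*π*y))))
          + Real.sin (((k:ℝ)+1)*π*x)*((((k:ℝ)+2)*π)*(-(((k:ℝ)+2)*π*Real.sin (((k:ℝ)+2)*π*y))))) := by
    rw [funext dy]
    exact (((((hasDerivAt_cos_mul (((k:ℝ)+1)*π) y).const_mul (((k:ℝ)+1)*π)).const_mul _).add
      ((((hasDerivAt_cos_mul (((k:ℝ)+2)*π) y).const_mul (((k:ℝ)+2)*π)).const_mul _))).const_mul 2).deriv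
  rw [d2x, d2y, hmn_sq, u_simp]
  have hS : (((k:ℝ)+1)^2+((k:ℝ)+2)^2) ≠ 0 := by positivity
  field_simp
  ring

def T2 : Set (ℝ × ℝ) := {p | p.1 ≤ 1 ∧ p.2 ≤ 1 ∧ 1 ≤ p.1 + p.2}

lemma integral_sin_sq' (c : ℝ) (hc : c ≠ 0) (s t : ℝ) :
    ∫ x in s..t, Real.sin (c*x)^2
      = (t/2 - (4*c)⁻¹*Real.sin (2*c*t)) - (s/2 - (4*c)⁻¹*Real.sin (2*c*s)) := by
  have hcont : Continuous fun x : ℝ => Real.sin (c*x)^2 := by continuity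
  refine intervalIntegral.integral_eq_sub_of_hasDerivAt
    (f := fun x : ℝ => x/2 - (4*c)⁻¹*Real.sin (2*c*x)) (fun x _ => ?_)
    (hcont.intervalIntegrable s t)
  have h1 : HasDerivAt (fun x : ℝ => x/2) (1/2) x := by
    simpa using (hasDerivAt_id x).div_const 2
  have h2 := (hasDerivAt_sin_mul (2*c) x).const_mul (4*c)⁻¹
  have H := h1.sub h2
  refine H.congr_deriv ?_
  rw [show 2*c*x = 2*(c*x) by ring, Real.cos_two_mul']
  have := Real.sin_sq_add_cos_sq (c*x)
  field_simp
  linear_combination (-4)*this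

set_option maxHeartbeats 2000000 in
lemma norm_one (k : ℕ) : ∫ p in T, (u (k+1) (k+2) p.1 p.2)^2 = 1 := by
  have hπ := Real.pi_ne_zero
  have hπpos := Real.pi_pos
  set F : ℝ × ℝ → ℝ := fun p => (u (k+1) (k+2) p.1 p.2)^2 with hF
  have hc : Continuous F := by
    simp only [hF, u_simp]; fun_prop
  -- closedness / compactness
  have hTclosed : IsClosed T := by
    have : T = {p : ℝ×ℝ | 0 ≤ p.1} ∩ ({p | 0 ≤ p.2} ∩ {p | p.1 + p.2 ≤ 1}) := rfl
    rw [this]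
    exact (isClosed_le continuous_const continuous_fst).inter
      ((isClosed_le continuous_const continuous_snd).inter
        (isClosed_le (continuous_fst.add continuous_snd) continuous_const))
  have hT2closed : IsClosed T2 := by
    have : T2 = {p : ℝ×ℝ | p.1 ≤ 1} ∩ ({p | p.2 ≤ 1} ∩ {p | 1 ≤ p.1 + p.2}) := rfl
    rw [this]
    exact (isClosed_le continuous_fst continuous_const).inter
      ((isClosed_le continuous_snd continuous_const).inter
        (isClosed_le continuous_const (continuous_fst.add continuous_snd)))
  have hTsub : T ⊆ Set.Icc ((0:ℝ),(0:ℝ)) (1,1) := by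
    rintro p ⟨h1, h2, h3⟩
    simp only [Set.mem_Icc, Prod.le_def]
    exact ⟨⟨h1, h2⟩, ⟨by linarith, by linarith⟩⟩
  have hT2sub : T2 ⊆ Set.Icc ((0:ℝ),(0:ℝ)) (1,1) := by
    rintro p ⟨h1, h2, h3⟩
    simp only [Set.mem_Icc, Prod.le_def]
    exact ⟨⟨by linarith, by linarith⟩, ⟨h1, h2⟩⟩
  have hTcomp : IsCompact T := IsCompact.of_isClosed_subset isCompact_Icc hTclosed hTsub
  have hT2comp : IsCompact T2 := IsCompact.of_isClosed_subset isCompact_Icc hT2closed hT2sub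
  have hIT : IntegrableOn F T := hc.continuousOn.integrableOn_compact hTcomp
  have hIT2 : IntegrableOn F T2 := hc.continuousOn.integrableOn_compact hT2comp
  have hISq : IntegrableOn F (Set.Icc (0:ℝ) 1 ×ˢ Set.Icc (0:ℝ) 1) :=
    hc.continuousOn.integrableOn_compact (isCompact_Icc.prod isCompact_Icc)
  -- measure preserving reflection
  have h1 : MeasurePreserving (fun t : ℝ => 1 - t) volume volume :=
    Measure.measurePreserving_sub_left volume 1
  have hmp : MeasurePreserving (fun p : ℝ×ℝ => ((1:ℝ) - p.2, (1:ℝ) - p.1)) volume volume := by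
    rw [Measure.volume_eq_prod]
    exact (h1.prod h1).comp Measure.measurePreserving_swap
  have hTmeas : MeasurableSet T := hTclosed.measurableSet
  have hT2meas : MeasurableSet T2 := hT2closed.measurableSet
  have hpre : (fun p : ℝ×ℝ => ((1:ℝ) - p.2, (1:ℝ) - p.1)) ⁻¹' T = T2 := by
    ext p
    simp only [Set.mem_preimage, T, T2, Set.mem_setOf_eq]
    constructor
    · rintro ⟨a, b, c⟩; exact ⟨by linarith, by linarith, by linarith⟩
    · rintro ⟨a, b, c⟩; exact ⟨by linarith, by linarith, by linarith⟩
  have hFσ : (fun p : ℝ×ℝ => F ((1:ℝ) - p.2, (1:ℝ) - p.1)) = F := by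
    funext p
    simp only [hF, u_simp]
    have g1 : ∀ t : ℝ, Real.sin (((k:ℝ)+1)*π*(1-t))
        = -(Real.cos (((k:ℝ)+1)*π) * Real.sin (((k:ℝ)+1)*π*t)) := by
      intro t
      rw [show ((k:ℝ)+1)*π*(1-t) = ((k:ℝ)+1)*π - ((k:ℝ)+1)*π*t by ring, Real.sin_sub,
        sin_val (k+1) (((k:ℝ)+1)*π) (by push_cast; ring)]
      ring
    have g2 : ∀ t : ℝ, Real.sin (((k:ℝ)+2)*π*(1-t))
        = -(Real.cos (((k:ℝ)+2)*π) * Real.sin (((k:ℝ)+2)*π*t)) := by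
      intro t
      rw [show ((k:ℝ)+2)*π*(1-t) = ((k:ℝ)+2)*π - ((k:ℝ)+2)*π*t by ring, Real.sin_sub,
        sin_val (k+2) (((k:ℝ)+2)*π) (by push_cast; ring)]
      ring
    have hcm : Real.cos (((k:ℝ)+2)*π) = -Real.cos (((k:ℝ)+1)*π) := by
      rw [show ((k:ℝ)+2)*π = ((k:ℝ)+1)*π + π by ring, Real.cos_add_pi]
    have hcm2 : Real.cos (((k:ℝ)+1)*π)^2 = 1 := by
      have h0 : Real.sin (((k:ℝ)+1)*π) = 0 := sin_val (k+1) _ (by push_cast; ring)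
      have h5 := Real.sin_sq_add_cos_sq (((k:ℝ)+1)*π)
      rw [h0] at h5; nlinarith [h5]
    rw [g1, g2, g1, g2, hcm]
    linear_combination (4*(Real.sin (((k:ℝ)+2)*π*p.2)*Real.sin (((k:ℝ)+1)*π*p.1)
      + Real.sin (((k:ℝ)+1)*π*p.2)*Real.sin (((k:ℝ)+2)*π*p.1))^2
      * (Real.cos (((k:ℝ)+1)*π)^2 + 1)) * hcm2
  have hswapInt : ∫ p in T, F p = ∫ p in T2, F p := by
    calc ∫ p in T, F p = ∫ p in T, F p ∂(Measure.map (fun p : ℝ×ℝ => ((1:ℝ) - p.2, (1:ℝ) - p.1)) volume) := by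
          rw [hmp.map_eq]
      _ = ∫ p in (fun p : ℝ×ℝ => ((1:ℝ) - p.2, (1:ℝ) - p.1)) ⁻¹' T,
            F ((1:ℝ) - p.2, (1:ℝ) - p.1) := by
          exact setIntegral_map hTmeas (by rw [hmp.map_eq]; exact hc.aestronglyMeasurable)
            hmp.measurable.aemeasurable
      _ = ∫ p in T2, F p := by rw [hpre, hFσ]
  -- the line has measure zero
  have hline : (volume : Measure (ℝ×ℝ)) {p : ℝ×ℝ | p.1 + p.2 = 1} = 0 := by
    have hlm : MeasurableSet {p : ℝ×ℝ | p.1 + p.2 = 1} :=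
      (isClosed_eq (continuous_fst.add continuous_snd) continuous_const).measurableSet
    rw [Measure.volume_eq_prod, Measure.prod_apply hlm]
    have hs : ∀ x : ℝ, (Prod.mk x ⁻¹' {p : ℝ×ℝ | p.1 + p.2 = 1}) = {1 - x} := by
      intro x; ext y
      simp only [Set.mem_preimage, Set.mem_setOf_eq, Set.mem_singleton_iff]
      constructor <;> intro h <;> linarith
    simp [hs]
  have hdisj : AEDisjoint volume T T2 := by
    refine measure_mono_null ?_ hline
    rintro p ⟨⟨_, _, h3⟩, ⟨_, _, h6⟩⟩
    exact le_antisymm h3 h6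
  have hunion : T ∪ T2 = Set.Icc (0:ℝ) 1 ×ˢ Set.Icc (0:ℝ) 1 := by
    ext p
    simp only [Set.mem_union, T, T2, Set.mem_setOf_eq, Set.mem_prod, Set.mem_Icc]
    constructor
    · rintro (⟨a, b, c⟩ | ⟨a, b, c⟩)
      · exact ⟨⟨a, by linarith⟩, ⟨b, by linarith⟩⟩
      · exact ⟨⟨by linarith, a⟩, ⟨by linarith, b⟩⟩
    · rintro ⟨⟨a, b⟩, ⟨c, d⟩⟩
      rcases le_total (p.1 + p.2) 1 with h | h
      · exact Or.inl ⟨a, c, h⟩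
      · exact Or.inr ⟨b, d, h⟩
  -- Fubini: the square integral equals 2
  have hSq : ∫ p in Set.Icc (0:ℝ) 1 ×ˢ Set.Icc (0:ℝ) 1, F p = 2 := by
    rw [Measure.volume_eq_prod] at hISq ⊢
    rw [setIntegral_prod F hISq]
    have hg : ∀ x : ℝ, (∫ y in Set.Icc (0:ℝ) 1, F (x, y))
        = 2*Real.sin (((k:ℝ)+2)*π*x)^2 + 2*Real.sin (((k:ℝ)+1)*π*x)^2 := by
      intro x
      rw [integral_Icc_eq_integral_Ioc,
        ← intervalIntegral.integral_of_le (by norm_num : (0:ℝ) ≤ 1)]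
      have e : (fun y => F (x, y))
          = fun y => ((2*Real.sin (((k:ℝ)+2)*π*x))*Real.sin ((((k:ℝ)+1)*π)*y)
            + (2*Real.sin (((k:ℝ)+1)*π*x))*Real.sin ((((k:ℝ)+2)*π)*y))^2 := by
        funext y; simp only [hF, u_simp]; ring
      rw [show (∫ y in (0:ℝ)..1, F (x, y)) = ∫ y in (0:ℝ)..1,
        ((2*Real.sin (((k:ℝ)+2)*π*x))*Real.sin ((((k:ℝ)+1)*π)*y)
          + (2*Real.sin (((k:ℝ)+1)*π*x))*Real.sin ((((k:ℝ)+2)*π)*y))^2 from by rw [← e]]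
      rw [integral_two_sin _ _ _ _ (by positivity) (by positivity)
        (by intro hd; rw [show ((k:ℝ)+1)*π - ((k:ℝ)+2)*π = -π by ring] at hd
            exact hπ (by linarith [neg_eq_zero.mp hd]))
        (by positivity)]
      have f1 : Real.sin (2*(((k:ℝ)+1)*π)*1) = 0 := sin_val (2*k+2) _ (by push_cast; ring)
      have f2 : Real.sin (2*(((k:ℝ)+2)*π)*1) = 0 := sin_val (2*k+4) _ (by push_cast; ring)
      have f3 : Real.sin ((((k:ℝ)+1)*π - ((k:ℝ)+2)*π)*1) = 0 := by
        rw [show (((k:ℝ)+1)*π - ((k:ℝ)+2)*π)*1 = -π by ring, Real.sin_neg, Real.sin_pi, neg_zero]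
      have f4 : Real.sin ((((k:ℝ)+1)*π + ((k:ℝ)+2)*π)*1) = 0 := sin_val (2*k+3) _ (by push_cast; ring)
      simp only [Fa, f1, f2, f3, f4, mul_zero, Real.sin_zero]
      ring
    rw [show (fun x => ∫ y in Set.Icc (0:ℝ) 1, F (x, y))
      = fun x => 2*Real.sin (((k:ℝ)+2)*π*x)^2 + 2*Real.sin (((k:ℝ)+1)*π*x)^2 from funext hg]
    rw [integral_Icc_eq_integral_Ioc,
      ← intervalIntegral.integral_of_le (by norm_num : (0:ℝ) ≤ 1)]
    have c1 : Continuous fun x : ℝ => 2*Real.sin (((k:ℝ)+2)*π*x)^2 :=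
      continuous_const.mul ((Real.continuous_sin.comp (continuous_const.mul continuous_id)).pow 2)
    have c2 : Continuous fun x : ℝ => 2*Real.sin (((k:ℝ)+1)*π*x)^2 :=
      continuous_const.mul ((Real.continuous_sin.comp (continuous_const.mul continuous_id)).pow 2)
    rw [intervalIntegral.integral_add (c1.intervalIntegrable 0 1) (c2.intervalIntegrable 0 1),
      intervalIntegral.integral_const_mul, intervalIntegral.integral_const_mul,
      integral_sin_sq' _ (by positivity), integral_sin_sq' _ (by positivity)]
    have f1 : Real.sin (2*(((k:ℝ)+1)*π)*1) = 0 := sin_val (2*k+2) _ (by push_cast; ring)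
    have f2 : Real.sin (2*(((k:ℝ)+2)*π)*1) = 0 := sin_val (2*k+4) _ (by push_cast; ring)
    rw [f1, f2]
    norm_num
  -- combine
  have := integral_union_ae hdisj hT2meas.nullMeasurableSet hIT hIT2
  rw [hunion, hSq] at this
  rw [show (∫ p in T, (u (k+1) (k+2) p.1 p.2)^2) = ∫ p in T, F p from rfl]
  linarith [hswapInt, this]

lemma boundary (k : ℕ) : ∀ p ∈ frontier T, u (k+1) (k+2) p.1 p.2 = 0 := by
  intro p hp
  have hTclosed : IsClosed T := by
    have : T = {p : ℝ×ℝ | 0 ≤ p.1} ∩ ({p | 0 ≤ p.2} ∩ {p | p.1 + p.2 ≤ 1}) := rfl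
    rw [this]
    exact (isClosed_le continuous_const continuous_fst).inter
      ((isClosed_le continuous_const continuous_snd).inter
        (isClosed_le (continuous_fst.add continuous_snd) continuous_const))
  have hpT : p ∈ T := by
    have := frontier_subset_closure hp
    rwa [hTclosed.closure_eq] at this
  have hnotint : p ∉ interior T := by
    rw [hTclosed.frontier_eq] at hp; exact hp.2
  obtain ⟨a, b, c⟩ := hpT
  have hcases : p.1 = 0 ∨ p.2 = 0 ∨ p.1 + p.2 = 1 := by
    by_contra hco
    push_neg at hco
    obtain ⟨h1, h2, h3⟩ := hco
    apply hnotint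
    have hopen : IsOpen {q : ℝ×ℝ | 0 < q.1 ∧ 0 < q.2 ∧ q.1 + q.2 < 1} := by
      have : {q : ℝ×ℝ | 0 < q.1 ∧ 0 < q.2 ∧ q.1 + q.2 < 1}
          = {q : ℝ×ℝ | 0 < q.1} ∩ ({q | 0 < q.2} ∩ {q | q.1 + q.2 < 1}) := rfl
      rw [this]
      exact (isOpen_lt continuous_const continuous_fst).inter
        ((isOpen_lt continuous_const continuous_snd).inter
          (isOpen_lt (continuous_fst.add continuous_snd) continuous_const))
    have hsub : {q : ℝ×ℝ | 0 < q.1 ∧ 0 < q.2 ∧ q.1 + q.2 < 1} ⊆ T := by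
      rintro q ⟨q1, q2, q3⟩; exact ⟨q1.le, q2.le, q3.le⟩
    exact interior_maximal hsub hopen
      ⟨lt_of_le_of_ne a (Ne.symm h1), lt_of_le_of_ne b (Ne.symm h2), lt_of_le_of_ne c h3⟩
  rcases hcases with h | h | h
  · rw [u_simp, h]; simp
  · rw [u_simp, h]; simp
  · have hy : p.2 = 1 - p.1 := by linarith
    rw [u_simp, hy]
    have g1 : Real.sin (((k:ℝ)+1)*π*(1-p.1))
        = -(Real.cos (((k:ℝ)+1)*π) * Real.sin (((k:ℝ)+1)*π*p.1)) := by
      rw [show ((k:ℝ)+1)*π*(1-p.1) = ((k:ℝ)+1)*π - ((k:ℝ)+1)*π*p.1 by ring, Real.sin_sub,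
        sin_val (k+1) (((k:ℝ)+1)*π) (by push_cast; ring)]
      ring
    have g2 : Real.sin (((k:ℝ)+2)*π*(1-p.1))
        = -(Real.cos (((k:ℝ)+2)*π) * Real.sin (((k:ℝ)+2)*π*p.1)) := by
      rw [show ((k:ℝ)+2)*π*(1-p.1) = ((k:ℝ)+2)*π - ((k:ℝ)+2)*π*p.1 by ring, Real.sin_sub,
        sin_val (k+2) (((k:ℝ)+2)*π) (by push_cast; ring)]
      ring
    have hcm : Real.cos (((k:ℝ)+2)*π) = -Real.cos (((k:ℝ)+1)*π) := by
      rw [show ((k:ℝ)+2)*π = ((k:ℝ)+1)*π + π by ring, Real.cos_add_pi]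
    rw [g1, g2, hcm]
    ring

lemma hmn_tendsto : Tendsto (fun k => hmn (k+1) (k+2)) atTop (nhds 0) := by
  refine tendsto_of_tendsto_of_tendsto_of_le_of_le (g := fun _ => (0:ℝ))
    (h := fun k : ℕ => 1/((k:ℝ)+1)) tendsto_const_nhds
    tendsto_one_div_add_atTop_nhds_zero_nat (fun k => (hmn_pos k).le) (fun k => ?_)
  rw [hmn]
  have hk : (0:ℝ) ≤ (k:ℝ) := Nat.cast_nonneg k
  have h1 : ((k:ℝ)+1)^2 ≤ π^2*(((k+1:ℕ):ℝ)^2 + ((k+2:ℕ):ℝ)^2) := by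
    push_cast
    have h9 : (9:ℝ) ≤ π^2 := by nlinarith [Real.pi_gt_three]
    have hs : (0:ℝ) ≤ ((k:ℝ)+1)^2 + ((k:ℝ)+2)^2 := by positivity
    nlinarith [mul_le_mul_of_nonneg_right h9 hs]
  refine one_div_le_one_div_of_le (by linarith) ?_
  calc (k:ℝ)+1 = Real.sqrt (((k:ℝ)+1)^2) := (Real.sqrt_sq (by linarith)).symm
    _ ≤ _ := Real.sqrt_le_sqrt h1

lemma L_eq (k : ℕ) :
    ∫ x in (0:ℝ)..(1/2), (hmn (k+1) (k+2))^2 * (deriv (fun y => u (k+1) (k+2) x y) 0)^2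
      = 1 + (4*((k:ℝ)+1)*((k:ℝ)+2)/(((k:ℝ)+1)^2+((k:ℝ)+2)^2))
          * (1 + (-1)^k/(2*(k:ℝ)+3)) / π := by
  have hπ := Real.pi_ne_zero
  have hS : (((k:ℝ)+1)^2+((k:ℝ)+2)^2) ≠ 0 := by positivity
  have h3 : (2*(k:ℝ)+3) ≠ 0 := by positivity
  rw [neumann_integral, (Fa_eval k).1, (Fa_eval k).2.1, hmn_sq]
  field_simp
  ring

lemma R_eq (k : ℕ) :
    ∫ x in (1/2:ℝ)..1, (hmn (k+1) (k+2))^2 * (deriv (fun y => u (k+1) (k+2) x y) 0)^2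
      = 1 - (4*((k:ℝ)+1)*((k:ℝ)+2)/(((k:ℝ)+1)^2+((k:ℝ)+2)^2))
          * (1 + (-1)^k/(2*(k:ℝ)+3)) / π := by
  have hπ := Real.pi_ne_zero
  have hS : (((k:ℝ)+1)^2+((k:ℝ)+2)^2) ≠ 0 := by positivity
  have h3 : (2*(k:ℝ)+3) ≠ 0 := by positivity
  rw [neumann_integral, (Fa_eval k).2.2, (Fa_eval k).1, hmn_sq]
  field_simp
  ring

lemma cw_bounds (k : ℕ) :
    2/3 ≤ (4*((k:ℝ)+1)*((k:ℝ)+2)/(((k:ℝ)+1)^2+((k:ℝ)+2)^2)) * (1 + (-1)^k/(2*(k:ℝ)+3))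
    ∧ (4*((k:ℝ)+1)*((k:ℝ)+2)/(((k:ℝ)+1)^2+((k:ℝ)+2)^2)) * (1 + (-1)^k/(2*(k:ℝ)+3)) ≤ 8/3 := by
  have hk : (0:ℝ) ≤ (k:ℝ) := Nat.cast_nonneg k
  have hSpos : (0:ℝ) < (((k:ℝ)+1)^2+((k:ℝ)+2)^2) := by positivity
  have h3pos : (0:ℝ) < 2*(k:ℝ)+3 := by linarith
  set c := 4*((k:ℝ)+1)*((k:ℝ)+2)/(((k:ℝ)+1)^2+((k:ℝ)+2)^2) with hc
  set w := 1 + (-1:ℝ)^k/(2*(k:ℝ)+3) with hw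
  have hc1 : 1 ≤ c := by
    rw [hc, le_div_iff₀ hSpos]
    nlinarith
  have hc2 : c ≤ 2 := by
    rw [hc, div_le_iff₀ hSpos]
    nlinarith
  have hw1 : 2/3 ≤ w ∧ w ≤ 4/3 := by
    have hle : 1/(2*(k:ℝ)+3) ≤ 1/3 := by
      apply one_div_le_one_div_of_le <;> linarith
    have hge : 0 < 1/(2*(k:ℝ)+3) := by positivity
    rcases Nat.even_or_odd k with he | ho
    · rw [hw, he.neg_one_pow]
      constructor <;> [linarith; linarith]
    · rw [hw, ho.neg_one_pow]
      constructor
      · have : -1/(2*(k:ℝ)+3) ≥ -(1/3) := by rw [neg_div]; linarith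
        linarith
      · have : -1/(2*(k:ℝ)+3) ≤ 0 := by rw [neg_div]; linarith
        linarith
  constructor
  · nlinarith [hw1.1, hw1.2]
  · nlinarith [hw1.1, hw1.2]

lemma final_ineq :
    liminf (fun k =>
        ∫ x in (0:ℝ)..(1/2), (hmn (k+1) (k+2))^2 * (deriv (fun y => u (k+1) (k+2) x y) 0)^2) atTop
      > limsup (fun k =>
        ∫ x in (1/2:ℝ)..1, (hmn (k+1) (k+2))^2 * (deriv (fun y => u (k+1) (k+2) x y) 0)^2) atTop := by
  have hπpos := Real.pi_pos
  have hπ3 : (3:ℝ) < π := Real.pi_gt_three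
  have hLlb : ∀ k : ℕ, 1 + 2/(3*π)
      ≤ ∫ x in (0:ℝ)..(1/2), (hmn (k+1) (k+2))^2 * (deriv (fun y => u (k+1) (k+2) x y) 0)^2 := by
    intro k
    rw [L_eq k]
    have h1 := (cw_bounds k).1
    have : (2/3)/π ≤ (4*((k:ℝ)+1)*((k:ℝ)+2)/(((k:ℝ)+1)^2+((k:ℝ)+2)^2))
        * (1 + (-1)^k/(2*(k:ℝ)+3)) / π := by
      apply div_le_div_of_nonneg_right h1 hπpos.le
    have e : (2:ℝ)/(3*π) = (2/3)/π := by ring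
    linarith [e ▸ this]
  have hLub : ∀ k : ℕ,
      (∫ x in (0:ℝ)..(1/2), (hmn (k+1) (k+2))^2 * (deriv (fun y => u (k+1) (k+2) x y) 0)^2) ≤ 4 := by
    intro k
    rw [L_eq k]
    have h2 := (cw_bounds k).2
    have : (4*((k:ℝ)+1)*((k:ℝ)+2)/(((k:ℝ)+1)^2+((k:ℝ)+2)^2))
        * (1 + (-1)^k/(2*(k:ℝ)+3)) / π ≤ (8/3)/π := by
      apply div_le_div_of_nonneg_right h2 hπpos.le
    have : (8:ℝ)/3/π ≤ 1 := by
      rw [div_le_one hπpos]; linarith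
    linarith
  have hRub : ∀ k : ℕ,
      (∫ x in (1/2:ℝ)..1, (hmn (k+1) (k+2))^2 * (deriv (fun y => u (k+1) (k+2) x y) 0)^2)
        ≤ 1 - 2/(3*π) := by
    intro k
    rw [R_eq k]
    have h1 := (cw_bounds k).1
    have : (2/3)/π ≤ (4*((k:ℝ)+1)*((k:ℝ)+2)/(((k:ℝ)+1)^2+((k:ℝ)+2)^2))
        * (1 + (-1)^k/(2*(k:ℝ)+3)) / π := by
      apply div_le_div_of_nonneg_right h1 hπpos.le
    have e : (2:ℝ)/(3*π) = (2/3)/π := by ring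
    linarith [e ▸ this]
  have hRlb : ∀ k : ℕ, (-4:ℝ)
      ≤ ∫ x in (1/2:ℝ)..1, (hmn (k+1) (k+2))^2 * (deriv (fun y => u (k+1) (k+2) x y) 0)^2 := by
    intro k
    rw [R_eq k]
    have h2 := (cw_bounds k).2
    have : (4*((k:ℝ)+1)*((k:ℝ)+2)/(((k:ℝ)+1)^2+((k:ℝ)+2)^2))
        * (1 + (-1)^k/(2*(k:ℝ)+3)) / π ≤ (8/3)/π := by
      apply div_le_div_of_nonneg_right h2 hπpos.le
    have : (8:ℝ)/3/π ≤ 1 := by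
      rw [div_le_one hπpos]; linarith
    linarith
  have h1 : IsBoundedUnder (· ≤ ·) atTop (fun k : ℕ =>
      ∫ x in (0:ℝ)..(1/2), (hmn (k+1) (k+2))^2 * (deriv (fun y => u (k+1) (k+2) x y) 0)^2) :=
    isBoundedUnder_of ⟨4, hLub⟩
  have h2 : IsBoundedUnder (· ≥ ·) atTop (fun k : ℕ =>
      ∫ x in (1/2:ℝ)..1, (hmn (k+1) (k+2))^2 * (deriv (fun y => u (k+1) (k+2) x y) 0)^2) :=
    isBoundedUnder_of ⟨-4, hRlb⟩
  have hub := limsup_le_of_le h2.isCoboundedUnder_le (Eventually.of_forall hRub)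
  have hlb := le_liminf_of_le h1.isCoboundedUnder_ge (Eventually.of_forall hLlb)
  have hmid : (1:ℝ) - 2/(3*π) < 1 + 2/(3*π) := by
    have : 0 < 2/(3*π) := by positivity
    linarith
  exact lt_of_le_of_lt hub (lt_of_lt_of_le hmid hlb)

/-- There exists a sequence of Dirichlet eigenfunctions on the right isosceles triangle
(namely `u_{k,k+1}` with semiclassical parameters `h_{k,k+1} → 0`) whose Neumann data on
the bottom side satisfies `liminf ∫₀^{1/2} > limsup ∫_{1/2}^1`: equidistribution of
Neumann data on half-sides fails along this sequence. -/
theorem neumann_half_side_non_equidistribution :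
    ∃ (v : ℕ → ℝ → ℝ → ℝ) (h : ℕ → ℝ),
      (∀ k, v k = u (k+1) (k+2)) ∧ (∀ k, h k = hmn (k+1) (k+2)) ∧
      (∀ k, 0 < h k) ∧
      Tendsto h atTop (nhds 0) ∧
      -- each `v k` is a Dirichlet eigenfunction: `-h²Δv = v` on `T`
      (∀ k, ∀ p ∈ T,
        -(h k) ^ 2 *
          (deriv (fun x' => deriv (fun x'' => v k x'' p.2) x') p.1
            + deriv (fun y' => deriv (fun y'' => v k p.1 y'') y') p.2)
        = v k p.1 p.2) ∧
      -- Dirichlet boundary condition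
      (∀ k, ∀ p ∈ frontier T, v k p.1 p.2 = 0) ∧
      -- `L²` normalization
      (∀ k, ∫ p in T, (v k p.1 p.2) ^ 2 = 1) ∧
      -- failure of half-side equidistribution of the Neumann data `|h ∂_ν v|² = h²(∂_y v)²`
      (liminf (fun k =>
          ∫ x in (0:ℝ)..(1/2), (h k) ^ 2 * (deriv (fun y => v k x y) 0) ^ 2) atTop
        > limsup (fun k =>
          ∫ x in (1/2:ℝ)..1, (h k) ^ 2 * (deriv (fun y => v k x y) 0) ^ 2) atTop) := by
  refine ⟨fun k => u (k+1) (k+2), fun k => hmn (k+1) (k+2), fun _ => rfl, fun _ => rfl,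
    hmn_pos, hmn_tendsto, fun k p _ => pde k p.1 p.2, boundary, norm_one, final_ineq⟩
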